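/- Let g : ℝ^N → ℝ be a fully-connected neural network with L layers, weight matrices W^(1), …, W^(L), final layer of width 1, and Softplus activation σ(t) = (1/β) ln(1 + e^{βt}) with parameter β > 0 applied componentwise. Then the Frobenius norm of the Hessian of g is bounded by ‖H(g)(x)‖_F ≤ (β/4) · Σ_{m=1}^{L} ( Π_{l=1}^{m} ‖W^(l)‖_F² · Π_{l=m+1}^{L} ‖W^(l)‖_F ) for all x ∈ ℝ^N. In particular, for fixed weights the bound decreases as β decreases. -/

import Mathlib

/-- The Softplus function with parameter `β`. -/
noncomputable def softplusF (β t : ℝ) : ℝ := (1 / β) * Real.log (1 + Real.exp (β * t))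

/-- The `l`-th layer activation `a^(l)` of a fully-connected network with
componentwise activation `σ` and weight matrices `W`: `a^(0)(x) = x`,
`a^(l+1)(x) = σ(W^(l+1) a^(l)(x))`. -/
noncomputable def layerAct (σ : ℝ → ℝ) (n : ℕ → ℕ)
    (W : ∀ l, Matrix (Fin (n (l + 1))) (Fin (n l)) ℝ) :
    ∀ l, (Fin (n 0) → ℝ) → Fin (n l) → ℝ
  | 0 => fun x => x
  | l + 1 => fun x i => σ (((W l).mulVec (layerAct σ n W l x)) i)

/-- Frobenius norm of a real matrix. -/
noncomputable def frobNorm {m k : ℕ} (A : Matrix (Fin m) (Fin k) ℝ) : ℝ :=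
  Real.sqrt (∑ i, ∑ j, (A i j) ^ 2)


noncomputable def sigp (β t : ℝ) : ℝ := Real.exp (β * t) / (1 + Real.exp (β * t))

lemma one_add_exp_pos (a : ℝ) : 0 < 1 + Real.exp a := by positivity

lemma sigp_nonneg (β t : ℝ) : 0 ≤ sigp β t :=
  div_nonneg (Real.exp_pos _).le (one_add_exp_pos _).le

lemma sigp_le_one (β t : ℝ) : sigp β t ≤ 1 := by
  rw [sigp, div_le_one (one_add_exp_pos _)]; linarith

lemma abs_sigp_le_one (β t : ℝ) : |sigp β t| ≤ 1 := by
  rw [abs_of_nonneg (sigp_nonneg β t)]; exact sigp_le_one β t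

lemma hasDerivAt_softplusF {β : ℝ} (hβ : 0 < β) (t : ℝ) :
    HasDerivAt (softplusF β) (sigp β t) t := by
  have h1 : HasDerivAt (fun s : ℝ => β * s) β t := by
    simpa using (hasDerivAt_id t).const_mul β
  have h2 : HasDerivAt (fun s : ℝ => Real.exp (β * s)) (Real.exp (β * t) * β) t := h1.exp
  have h3 : HasDerivAt (fun s : ℝ => 1 + Real.exp (β * s)) (Real.exp (β * t) * β) t :=
    h2.const_add 1
  have h4 := (h3.log (one_add_exp_pos (β * t)).ne')
  have h5 := h4.const_mul (1 / β)
  refine h5.congr_deriv (Eq.symm ?_)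
  unfold sigp; field_simp

lemma hasDerivAt_sigp (β t : ℝ) :
    HasDerivAt (sigp β) (β * sigp β t * (1 - sigp β t)) t := by
  have h1 : HasDerivAt (fun s : ℝ => β * s) β t := by
    simpa using (hasDerivAt_id t).const_mul β
  have h2 : HasDerivAt (fun s : ℝ => Real.exp (β * s)) (Real.exp (β * t) * β) t := h1.exp
  have h3 : HasDerivAt (fun s : ℝ => 1 + Real.exp (β * s)) (Real.exp (β * t) * β) t :=
    h2.const_add 1
  have h4 := h2.div h3 (one_add_exp_pos (β * t)).ne'
  refine h4.congr_deriv (Eq.symm ?_)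
  have hpos := one_add_exp_pos (β * t)
  unfold sigp; field_simp

lemma abs_sigpp_le {β : ℝ} (hβ : 0 < β) (t : ℝ) :
    |β * sigp β t * (1 - sigp β t)| ≤ β / 4 := by
  have h0 := sigp_nonneg β t
  have h1 := sigp_le_one β t
  have h2 : (0:ℝ) ≤ 1 - sigp β t := by linarith
  rw [abs_of_nonneg (mul_nonneg (mul_nonneg hβ.le h0) h2)]
  nlinarith [sq_nonneg (sigp β t - 1/2), mul_pos hβ (show (0:ℝ) < 1 by norm_num)]

section net

variable (n : ℕ → ℕ) (W : ∀ l, Matrix (Fin (n (l + 1))) (Fin (n l)) ℝ) (β : ℝ)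

/-- preactivation of layer m+1 -/
noncomputable def preZ (m : ℕ) (x : Fin (n 0) → ℝ) (k : Fin (n (m + 1))) : ℝ :=
  (W m).mulVec (layerAct (softplusF β) n W m x) k

/-- candidate Jacobian rows as continuous linear maps -/
noncomputable def Dclm : ∀ m, (Fin (n 0) → ℝ) → Fin (n m) → ((Fin (n 0) → ℝ) →L[ℝ] ℝ)
  | 0 => fun _ k => ContinuousLinearMap.proj k
  | m + 1 => fun x k =>
      sigp β (preZ n W β m x k) • ∑ l, (W m k l) • Dclm m x l

/-- candidate Hessian rows -/
noncomputable def Hclm : ∀ m, (Fin (n 0) → ℝ) → Fin (n m) → Fin (n 0) →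
    ((Fin (n 0) → ℝ) →L[ℝ] ℝ)
  | 0 => fun _ _ _ => 0
  | m + 1 => fun x k j =>
      ((β * sigp β (preZ n W β m x k) * (1 - sigp β (preZ n W β m x k)))
          * (∑ l, W m k l * Dclm n W β m x l (Pi.single j 1)))
        • (∑ l, (W m k l) • Dclm n W β m x l)
      + sigp β (preZ n W β m x k) • ∑ l, (W m k l) • Hclm m x l j

variable {n W β}

lemma hasFDerivAt_layerAct (hβ : 0 < β) :
    ∀ (m : ℕ) (x : Fin (n 0) → ℝ) (k : Fin (n m)),
      HasFDerivAt (fun y => layerAct (softplusF β) n W m y k) (Dclm n W β m x k) x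
  | 0, x, k => by
      simpa [layerAct, Dclm] using
        (hasFDerivAt_apply (𝕜 := ℝ) (F' := fun _ : Fin (n 0) => ℝ) k x)
  | m + 1, x, k => by
      have hz : HasFDerivAt (fun y => preZ n W β m y k)
          (∑ l, W m k l • Dclm n W β m x l) x := by
        simp only [preZ, Matrix.mulVec, dotProduct]
        exact HasFDerivAt.fun_sum fun l _ => (hasFDerivAt_layerAct hβ m x l).const_mul _
      have := (hasDerivAt_softplusF hβ (preZ n W β m x k)).comp_hasFDerivAt x hz
      simp only [Dclm, preZ, layerAct, Function.comp_def] at this ⊢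
      exact this

lemma hasFDerivAt_Dapp (hβ : 0 < β) :
    ∀ (m : ℕ) (x : Fin (n 0) → ℝ) (k : Fin (n m)) (j : Fin (n 0)),
      HasFDerivAt (fun y => Dclm n W β m y k (Pi.single j 1)) (Hclm n W β m x k j) x
  | 0, x, k, j => by
      simpa [Dclm, Hclm] using (hasFDerivAt_const (Pi.single (M := fun _ : Fin (n 0) => ℝ) j 1 k) x)
  | m + 1, x, k, j => by
      have hz : HasFDerivAt (fun y => preZ n W β m y k)
          (∑ l, W m k l • Dclm n W β m x l) x := by
        simp only [preZ, Matrix.mulVec, dotProduct]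
        exact HasFDerivAt.fun_sum fun l _ => (hasFDerivAt_layerAct hβ m x l).const_mul _
      have hs : HasFDerivAt (fun y => sigp β (preZ n W β m y k))
          ((β * sigp β (preZ n W β m x k) * (1 - sigp β (preZ n W β m x k)))
            • ∑ l, W m k l • Dclm n W β m x l) x :=
        (hasDerivAt_sigp β (preZ n W β m x k)).comp_hasFDerivAt (h₂ := sigp β) x hz
      have hsum : HasFDerivAt (fun y => ∑ l, W m k l * Dclm n W β m y l (Pi.single j 1))
          (∑ l, W m k l • Hclm n W β m x l j) x :=
        HasFDerivAt.fun_sum fun l _ => (hasFDerivAt_Dapp hβ m x l j).const_mul _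
      have := hs.mul hsum
      have heq : (fun y => Dclm n W β (m + 1) y k (Pi.single j 1))
          = fun y => sigp β (preZ n W β m y k)
              * ∑ l, W m k l * Dclm n W β m y l (Pi.single j 1) := by
        funext y
        simp [Dclm, ContinuousLinearMap.sum_apply, Finset.mul_sum]
      rw [heq]
      refine this.congr_fderiv (Eq.symm ?_)
      simp only [Hclm]
      rw [smul_smul]
      ring_nf
      abel

variable (n W β)

/-- scalar Jacobian entries -/
noncomputable def Dv (m : ℕ) (x : Fin (n 0) → ℝ) (k : Fin (n m)) (i : Fin (n 0)) : ℝ :=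
  Dclm n W β m x k (Pi.single i 1)

/-- scalar Hessian entries -/
noncomputable def Hv (m : ℕ) (x : Fin (n 0) → ℝ) (k : Fin (n m)) (i j : Fin (n 0)) : ℝ :=
  Hclm n W β m x k j (Pi.single i 1)

/-- pre-activation Jacobian entries -/
noncomputable def Sv (m : ℕ) (x : Fin (n 0) → ℝ) (k : Fin (n (m + 1))) (i : Fin (n 0)) : ℝ :=
  ∑ l, W m k l * Dv n W β m x l i

lemma Dv_zero (x : Fin (n 0) → ℝ) (k i : Fin (n 0)) :
    Dv n W β 0 x k i = if k = i then 1 else 0 := by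
  simp [Dv, Dclm, Pi.single_apply]

lemma Dv_succ (m : ℕ) (x : Fin (n 0) → ℝ) (k : Fin (n (m + 1))) (i : Fin (n 0)) :
    Dv n W β (m + 1) x k i = sigp β (preZ n W β m x k) * Sv n W β m x k i := by
  simp [Dv, Dclm, Sv, ContinuousLinearMap.sum_apply, Finset.mul_sum]

lemma Hv_zero (x : Fin (n 0) → ℝ) (k i j : Fin (n 0)) : Hv n W β 0 x k i j = 0 := by
  simp [Hv, Hclm]

lemma Hv_succ (m : ℕ) (x : Fin (n 0) → ℝ) (k : Fin (n (m + 1))) (i j : Fin (n 0)) :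
    Hv n W β (m + 1) x k i j
      = ((β * sigp β (preZ n W β m x k) * (1 - sigp β (preZ n W β m x k)))
            * Sv n W β m x k j) * Sv n W β m x k i
        + sigp β (preZ n W β m x k) * ∑ l, W m k l * Hv n W β m x l i j := by
  simp [Hv, Hclm, Sv, Dv, ContinuousLinearMap.sum_apply, Finset.mul_sum, mul_assoc]

noncomputable def JN (m : ℕ) (x : Fin (n 0) → ℝ) : ℝ :=
  ∑ k, ∑ i, (Dv n W β m x k i) ^ 2

noncomputable def SN (m : ℕ) (x : Fin (n 0) → ℝ) : ℝ :=
  ∑ k, ∑ i, (Sv n W β m x k i) ^ 2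

noncomputable def HN (m : ℕ) (x : Fin (n 0) → ℝ) : ℝ :=
  ∑ k, ∑ i, ∑ j, (Hv n W β m x k i j) ^ 2

variable {n W β}

lemma frob_sq {m k : ℕ} (A : Matrix (Fin m) (Fin k) ℝ) :
    frobNorm A ^ 2 = ∑ i, ∑ j, (A i j) ^ 2 := Real.sq_sqrt (by positivity)

lemma frob_nonneg {m k : ℕ} (A : Matrix (Fin m) (Fin k) ℝ) : 0 ≤ frobNorm A :=
  Real.sqrt_nonneg _

lemma sqrt_sum_sq_add_le {ι : Type*} [Fintype ι] (f g : ι → ℝ) :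
    Real.sqrt (∑ i, (f i + g i) ^ 2)
      ≤ Real.sqrt (∑ i, (f i) ^ 2) + Real.sqrt (∑ i, (g i) ^ 2) := by
  set a := Real.sqrt (∑ i, (f i) ^ 2) with ha
  set b := Real.sqrt (∑ i, (g i) ^ 2) with hb
  have ha0 : 0 ≤ a := Real.sqrt_nonneg _
  have hb0 : 0 ≤ b := Real.sqrt_nonneg _
  have hfa : ∑ i, (f i) ^ 2 = a ^ 2 := (Real.sq_sqrt (by positivity)).symm
  have hgb : ∑ i, (g i) ^ 2 = b ^ 2 := (Real.sq_sqrt (by positivity)).symm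
  have hcs : ∑ i, f i * g i ≤ a * b := by
    simpa [ha, hb] using Real.sum_mul_le_sqrt_mul_sqrt Finset.univ f g
  have hexp : ∑ i, (f i + g i) ^ 2 ≤ (a + b) ^ 2 := by
    have h1 : ∑ i, (f i + g i) ^ 2
        = ∑ i, (f i) ^ 2 + 2 * (∑ i, f i * g i) + ∑ i, (g i) ^ 2 := by
      rw [Finset.mul_sum, ← Finset.sum_add_distrib, ← Finset.sum_add_distrib]
      exact Finset.sum_congr rfl fun i _ => by ring
    nlinarith
  calc Real.sqrt (∑ i, (f i + g i) ^ 2) ≤ Real.sqrt ((a + b) ^ 2) := Real.sqrt_le_sqrt hexp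
    _ = a + b := Real.sqrt_sq (by positivity)

lemma sqrt_sum_sq_le_sum {ι : Type*} [Fintype ι] (f : ι → ℝ) (hf : ∀ i, 0 ≤ f i) :
    Real.sqrt (∑ i, (f i) ^ 2) ≤ ∑ i, f i := by
  have h : ∑ i, (f i) ^ 2 ≤ (∑ i, f i) ^ 2 := by
    calc ∑ i, (f i) ^ 2 = ∑ i, f i * f i := by simp [sq]
      _ ≤ ∑ i, f i * (∑ j, f j) := Finset.sum_le_sum fun i _ =>
          mul_le_mul_of_nonneg_left (Finset.single_le_sum (fun j _ => hf j) (Finset.mem_univ i))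
            (hf i)
      _ = (∑ i, f i) ^ 2 := by rw [← Finset.sum_mul, sq]
  calc Real.sqrt _ ≤ Real.sqrt ((∑ i, f i) ^ 2) := Real.sqrt_le_sqrt h
    _ = _ := Real.sqrt_sq (Finset.sum_nonneg fun i _ => hf i)

lemma cs_rows {K L I : Type*} [Fintype K] [Fintype L] [Fintype I] (A : K → L → ℝ)
    (v : L → I → ℝ) :
    ∑ k, ∑ i, (∑ l, A k l * v l i) ^ 2
      ≤ (∑ k, ∑ l, (A k l) ^ 2) * (∑ l, ∑ i, (v l i) ^ 2) := by
  have h1 : ∀ k, ∑ i, (∑ l, A k l * v l i) ^ 2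
      ≤ (∑ l, (A k l) ^ 2) * (∑ l, ∑ i, (v l i) ^ 2) := by
    intro k
    calc ∑ i, (∑ l, A k l * v l i) ^ 2
        ≤ ∑ i, (∑ l, (A k l) ^ 2) * (∑ l, (v l i) ^ 2) :=
          Finset.sum_le_sum fun i _ => Finset.sum_mul_sq_le_sq_mul_sq _ _ _
      _ = (∑ l, (A k l) ^ 2) * (∑ i, ∑ l, (v l i) ^ 2) := by rw [← Finset.mul_sum]
      _ = (∑ l, (A k l) ^ 2) * (∑ l, ∑ i, (v l i) ^ 2) := by rw [Finset.sum_comm]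
  calc ∑ k, ∑ i, (∑ l, A k l * v l i) ^ 2
      ≤ ∑ k, (∑ l, (A k l) ^ 2) * (∑ l, ∑ i, (v l i) ^ 2) :=
        Finset.sum_le_sum fun k _ => h1 k
    _ = _ := by rw [← Finset.sum_mul]

lemma cs_rows3 {K L I J : Type*} [Fintype K] [Fintype L] [Fintype I] [Fintype J]
    (A : K → L → ℝ) (v : L → I → J → ℝ) :
    ∑ k, ∑ i, ∑ j, (∑ l, A k l * v l i j) ^ 2
      ≤ (∑ k, ∑ l, (A k l) ^ 2) * (∑ l, ∑ i, ∑ j, (v l i j) ^ 2) := by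
  have := cs_rows (I := I × J) A (fun l p => v l p.1 p.2)
  simpa [Fintype.sum_prod_type] using this

lemma sqrt_tri {K I J : Type*} [Fintype K] [Fintype I] [Fintype J] (f g : K → I → J → ℝ) :
    Real.sqrt (∑ k, ∑ i, ∑ j, (f k i j + g k i j) ^ 2)
      ≤ Real.sqrt (∑ k, ∑ i, ∑ j, (f k i j) ^ 2)
        + Real.sqrt (∑ k, ∑ i, ∑ j, (g k i j) ^ 2) := by
  have := sqrt_sum_sq_add_le (ι := K × I × J) (fun p => f p.1 p.2.1 p.2.2)
    (fun p => g p.1 p.2.1 p.2.2)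
  simpa [Fintype.sum_prod_type] using this

lemma JN_nonneg (m : ℕ) (x : Fin (n 0) → ℝ) : 0 ≤ JN n W β m x := by
  apply Finset.sum_nonneg; intro k _; positivity

lemma SN_nonneg (m : ℕ) (x : Fin (n 0) → ℝ) : 0 ≤ SN n W β m x := by
  apply Finset.sum_nonneg; intro k _; positivity

lemma HN_nonneg (m : ℕ) (x : Fin (n 0) → ℝ) : 0 ≤ HN n W β m x := by
  apply Finset.sum_nonneg; intro k _; positivity

lemma Sv_zero (x : Fin (n 0) → ℝ) (k : Fin (n 1)) (i : Fin (n 0)) :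
    Sv n W β 0 x k i = W 0 k i := by
  simp [Sv, Dv_zero, mul_ite, Finset.sum_ite_eq, Finset.sum_ite_eq']

lemma SN_le_frob_mul_JN (m : ℕ) (x : Fin (n 0) → ℝ) :
    SN n W β m x ≤ frobNorm (W m) ^ 2 * JN n W β m x := by
  rw [frob_sq]
  exact cs_rows _ _

lemma JN_succ_le_SN (m : ℕ) (x : Fin (n 0) → ℝ) :
    JN n W β (m + 1) x ≤ SN n W β m x := by
  refine Finset.sum_le_sum fun k _ => Finset.sum_le_sum fun i _ => ?_
  rw [Dv_succ, mul_pow]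
  have h0 := sigp_nonneg β (preZ n W β m x k)
  have h1 := sigp_le_one β (preZ n W β m x k)
  have hs : sigp β (preZ n W β m x k) ^ 2 ≤ 1 := by nlinarith
  exact mul_le_of_le_one_left (sq_nonneg _) hs

lemma SN_le (m : ℕ) (x : Fin (n 0) → ℝ) :
    SN n W β m x ≤ ∏ l ∈ Finset.range (m + 1), frobNorm (W l) ^ 2 := by
  induction m generalizing x with
  | zero =>
      rw [Finset.prod_range_one, frob_sq]
      refine le_of_eq ?_
      unfold SN
      exact Finset.sum_congr rfl fun k _ => Finset.sum_congr rfl fun i _ => by rw [Sv_zero]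
  | succ m ih =>
      calc SN n W β (m + 1) x ≤ frobNorm (W (m + 1)) ^ 2 * JN n W β (m + 1) x :=
            SN_le_frob_mul_JN _ _
        _ ≤ frobNorm (W (m + 1)) ^ 2 * SN n W β m x :=
            mul_le_mul_of_nonneg_left (JN_succ_le_SN m x) (by positivity)
        _ ≤ frobNorm (W (m + 1)) ^ 2 * ∏ l ∈ Finset.range (m + 1), frobNorm (W l) ^ 2 :=
            mul_le_mul_of_nonneg_left (ih x) (by positivity)
        _ = ∏ l ∈ Finset.range (m + 1 + 1), frobNorm (W l) ^ 2 := by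
            rw [Finset.prod_range_succ (f := fun l => frobNorm (W l) ^ 2) (n := m + 1),
              Finset.prod_range_succ (f := fun l => frobNorm (W l) ^ 2) (n := m)]
            ring

lemma HN_sqrt_le (hβ : 0 < β) (m : ℕ) (x : Fin (n 0) → ℝ) :
    Real.sqrt (HN n W β m x)
      ≤ (β / 4) * ∑ p ∈ Finset.Icc 1 m,
          (∏ l ∈ Finset.range p, frobNorm (W l) ^ 2) * ∏ l ∈ Finset.Ico p m, frobNorm (W l) := by
  induction m generalizing x with
  | zero => simp [HN, Hv_zero]
  | succ m ih =>
      set c : Fin (n (m + 1)) → ℝ := fun k =>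
        β * sigp β (preZ n W β m x k) * (1 - sigp β (preZ n W β m x k)) with hc
    -- split Hessian into two terms
      have hsplit : Real.sqrt (HN n W β (m + 1) x)
          ≤ Real.sqrt (∑ k, ∑ i, ∑ j, ((c k * Sv n W β m x k j) * Sv n W β m x k i) ^ 2)
            + Real.sqrt (∑ k, ∑ i, ∑ j,
                (sigp β (preZ n W β m x k) * ∑ l, W m k l * Hv n W β m x l i j) ^ 2) := by
        have : HN n W β (m + 1) x = ∑ k, ∑ i, ∑ j,
            ((c k * Sv n W β m x k j) * Sv n W β m x k i
              + sigp β (preZ n W β m x k) * ∑ l, W m k l * Hv n W β m x l i j) ^ 2 := by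
          unfold HN
          exact Finset.sum_congr rfl fun k _ => Finset.sum_congr rfl fun i _ =>
            Finset.sum_congr rfl fun j _ => by rw [Hv_succ]
        rw [this]
        exact sqrt_tri _ _
      have hq : ∀ k, 0 ≤ ∑ i, (Sv n W β m x k i) ^ 2 := fun k => by positivity
      -- first term
      have h1 : Real.sqrt (∑ k, ∑ i, ∑ j, ((c k * Sv n W β m x k j) * Sv n W β m x k i) ^ 2)
          ≤ (β / 4) * ∏ l ∈ Finset.range (m + 1), frobNorm (W l) ^ 2 := by
        have hval : ∀ k, ∑ i, ∑ j, ((c k * Sv n W β m x k j) * Sv n W β m x k i) ^ 2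
            = (c k) ^ 2 * (∑ i, (Sv n W β m x k i) ^ 2) ^ 2 := by
          intro k
          have : ∀ i : Fin (n 0), ∑ j, ((c k * Sv n W β m x k j) * Sv n W β m x k i) ^ 2
              = (Sv n W β m x k i) ^ 2 * ∑ j, (c k) ^ 2 * (Sv n W β m x k j) ^ 2 := by
            intro i
            rw [Finset.mul_sum]
            exact Finset.sum_congr rfl fun j _ => by ring
          rw [Finset.sum_congr rfl fun i _ => this i, ← Finset.sum_mul, ← Finset.mul_sum]
          ring
        have hcb : ∀ k, (c k) ^ 2 ≤ (β / 4) ^ 2 := by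
          intro k
          have := abs_sigpp_le hβ (preZ n W β m x k)
          calc (c k) ^ 2 = |c k| ^ 2 := (sq_abs _).symm
            _ ≤ (β / 4) ^ 2 := by
                apply pow_le_pow_left₀ (abs_nonneg _)
                simpa [hc] using this
        have hle : ∑ k, ∑ i, ∑ j, ((c k * Sv n W β m x k j) * Sv n W β m x k i) ^ 2
            ≤ (β / 4) ^ 2 * ∑ k, (∑ i, (Sv n W β m x k i) ^ 2) ^ 2 := by
          rw [Finset.sum_congr rfl fun k _ => hval k, Finset.mul_sum]
          exact Finset.sum_le_sum fun k _ =>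
            mul_le_mul_of_nonneg_right (hcb k) (by positivity)
        calc Real.sqrt (∑ k, ∑ i, ∑ j, ((c k * Sv n W β m x k j) * Sv n W β m x k i) ^ 2)
            ≤ Real.sqrt ((β / 4) ^ 2 * ∑ k, (∑ i, (Sv n W β m x k i) ^ 2) ^ 2) :=
              Real.sqrt_le_sqrt hle
          _ = (β / 4) * Real.sqrt (∑ k, (∑ i, (Sv n W β m x k i) ^ 2) ^ 2) := by
              rw [Real.sqrt_mul (sq_nonneg _), Real.sqrt_sq (by positivity)]
          _ ≤ (β / 4) * ∑ k, ∑ i, (Sv n W β m x k i) ^ 2 := by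
              apply mul_le_mul_of_nonneg_left _ (by positivity)
              exact sqrt_sum_sq_le_sum _ hq
          _ ≤ (β / 4) * ∏ l ∈ Finset.range (m + 1), frobNorm (W l) ^ 2 :=
              mul_le_mul_of_nonneg_left (SN_le m x) (by positivity)
      -- second term
      have h2 : Real.sqrt (∑ k, ∑ i, ∑ j,
            (sigp β (preZ n W β m x k) * ∑ l, W m k l * Hv n W β m x l i j) ^ 2)
          ≤ frobNorm (W m) * Real.sqrt (HN n W β m x) := by
        have hle : ∑ k, ∑ i, ∑ j,
              (sigp β (preZ n W β m x k) * ∑ l, W m k l * Hv n W β m x l i j) ^ 2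
            ≤ frobNorm (W m) ^ 2 * HN n W β m x := by
          calc ∑ k, ∑ i, ∑ j,
                (sigp β (preZ n W β m x k) * ∑ l, W m k l * Hv n W β m x l i j) ^ 2
              ≤ ∑ k, ∑ i, ∑ j, (∑ l, W m k l * Hv n W β m x l i j) ^ 2 := by
                refine Finset.sum_le_sum fun k _ => Finset.sum_le_sum fun i _ =>
                  Finset.sum_le_sum fun j _ => ?_
                rw [mul_pow]
                have h0 := sigp_nonneg β (preZ n W β m x k)
                have h1 := sigp_le_one β (preZ n W β m x k)
                have hs : sigp β (preZ n W β m x k) ^ 2 ≤ 1 := by nlinarith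
                exact mul_le_of_le_one_left (sq_nonneg _) hs
            _ ≤ (∑ k, ∑ l, (W m k l) ^ 2) * (∑ l, ∑ i, ∑ j, (Hv n W β m x l i j) ^ 2) :=
                cs_rows3 _ _
            _ = frobNorm (W m) ^ 2 * HN n W β m x := by rw [frob_sq]; rfl
        calc Real.sqrt _ ≤ Real.sqrt (frobNorm (W m) ^ 2 * HN n W β m x) :=
              Real.sqrt_le_sqrt hle
          _ = frobNorm (W m) * Real.sqrt (HN n W β m x) := by
              rw [Real.sqrt_mul (sq_nonneg _), Real.sqrt_sq (frob_nonneg _)]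
      -- combine
      have hcomb := hsplit.trans (add_le_add h1 (h2.trans
        (mul_le_mul_of_nonneg_left (ih x) (frob_nonneg _))))
      refine hcomb.trans (le_of_eq ?_)
      rw [Finset.sum_Icc_succ_top (Nat.one_le_iff_ne_zero.mpr (Nat.succ_ne_zero m))]
      have hIco : ∀ p ∈ Finset.Icc 1 m,
          (∏ l ∈ Finset.range p, frobNorm (W l) ^ 2) * ∏ l ∈ Finset.Ico p (m + 1), frobNorm (W l)
            = ((∏ l ∈ Finset.range p, frobNorm (W l) ^ 2)
                * ∏ l ∈ Finset.Ico p m, frobNorm (W l)) * frobNorm (W m) := by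
        intro p hp
        rw [Finset.prod_Ico_succ_top (Finset.mem_Icc.mp hp).2]
        ring
      rw [Finset.sum_congr rfl hIco, ← Finset.sum_mul, Finset.Ico_self, Finset.prod_empty]
      ring

end net

/-- for a fully-connected `L`-layer Softplus network `g` with scalar output,
the Frobenius norm of the Hessian of `g` is bounded by
`(β/4) · ∑_{m=1}^L (∏_{l=1}^m ‖W^(l)‖_F² ∏_{l=m+1}^L ‖W^(l)‖_F)`.
(Here `W l` is the paper's `W^(l+1)`.) -/
theorem hessian_frobenius_bound_of_softplus_network
    (n : ℕ → ℕ) (L : ℕ) (hL : 0 < L) (hout : n L = 1)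
    (W : ∀ l, Matrix (Fin (n (l + 1))) (Fin (n l)) ℝ)
    (β : ℝ) (hβ : 0 < β)
    (g : (Fin (n 0) → ℝ) → ℝ)
    (hg : ∀ x, g x = layerAct (softplusF β) n W L x (Fin.cast hout.symm 0)) :
    ∀ x : Fin (n 0) → ℝ,
      Real.sqrt (∑ i : Fin (n 0), ∑ j : Fin (n 0),
          (fderiv ℝ (fun y => fderiv ℝ g y (Pi.single j 1)) x (Pi.single i 1)) ^ 2)
        ≤ (β / 4) * ∑ m ∈ Finset.Icc 1 L,
            (∏ l ∈ Finset.range m, (frobNorm (W l)) ^ 2)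
              * (∏ l ∈ Finset.Ico m L, frobNorm (W l)) := by
  intro x
  set k0 : Fin (n L) := Fin.cast hout.symm 0 with hk0
  have hgf : g = fun y => layerAct (softplusF β) n W L y k0 := funext hg
  have hfd : ∀ y, fderiv ℝ g y = Dclm n W β L y k0 := by
    intro y; rw [hgf]; exact (hasFDerivAt_layerAct hβ L y k0).fderiv
  have hentry : ∀ i j : Fin (n 0),
      fderiv ℝ (fun y => fderiv ℝ g y (Pi.single j 1)) x (Pi.single i 1)
        = Hv n W β L x k0 i j := by
    intro i j
    have h1 : (fun y => fderiv ℝ g y (Pi.single j 1))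
        = fun y => Dclm n W β L y k0 (Pi.single j 1) := funext fun y => by rw [hfd y]
    rw [h1, (hasFDerivAt_Dapp hβ L x k0 j).fderiv]
    rfl
  have hsum : ∑ i : Fin (n 0), ∑ j : Fin (n 0),
      (fderiv ℝ (fun y => fderiv ℝ g y (Pi.single j 1)) x (Pi.single i 1)) ^ 2
        = ∑ i : Fin (n 0), ∑ j : Fin (n 0), (Hv n W β L x k0 i j) ^ 2 :=
    Finset.sum_congr rfl fun i _ => Finset.sum_congr rfl fun j _ => by rw [hentry i j]
  have hle : ∑ i : Fin (n 0), ∑ j : Fin (n 0), (Hv n W β L x k0 i j) ^ 2 ≤ HN n W β L x := by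
    unfold HN
    exact Finset.single_le_sum (f := fun k => ∑ i, ∑ j, (Hv n W β L x k i j) ^ 2)
      (fun k _ => by positivity) (Finset.mem_univ k0)
  calc Real.sqrt (∑ i : Fin (n 0), ∑ j : Fin (n 0),
        (fderiv ℝ (fun y => fderiv ℝ g y (Pi.single j 1)) x (Pi.single i 1)) ^ 2)
      = Real.sqrt (∑ i : Fin (n 0), ∑ j : Fin (n 0), (Hv n W β L x k0 i j) ^ 2) := by rw [hsum]
    _ ≤ Real.sqrt (HN n W β L x) := Real.sqrt_le_sqrt hle
    _ ≤ _ := HN_sqrt_le hβ L x
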